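/- arXiv:2006.11500 — 2 statements merged into one kernel-verified Lean document; each statement's English description precedes it below -/
import Mathlib

section
/- Let (X, ‖·‖) be a real Banach space and let T : X → X be an enriched 𝒜-contraction. Then the fixed point problem for T is well-posed: T has a unique fixed point p ∈ X, and for every sequence (u_n) in X with ‖u_n − T u_n‖ → 0 as n → ∞, one has ‖u_n − p‖ → 0 as n → ∞. -/
/-!
The Krasnoselskij averaged map `S = (b + 1)⁻¹ • (b • id + T)` has the same fixed points as `T`, and
by homogeneity of `f` it is an `𝒜`-contraction:
`dist (S u) (S v) ≤ f (dist u v, dist u (S u), dist v (S v))`. By `(𝒜₂)` its Picard iterates move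
by geometrically decreasing steps, and continuity of `f` at `(0, q, 0)` forces their limit to be
fixed. For a fixed point `p`, `d(u, p) ≤ d(u, S u) + f (d(u, p), d(u, S u), 0)`; scaling by
`d(u, p)⁻¹` and using `f (1, 0, 0) < 1` with continuity there gives `d(u, p) ≤ M * d(u, S u)`,
which yields both uniqueness and well-posedness.
-/

/-- Membership in the class `𝒜` of Akram-type comparison functions. -/
def MemA (f : ℝ × ℝ × ℝ → ℝ) : Prop :=
  ContinuousOn f {p : ℝ × ℝ × ℝ | 0 ≤ p.1 ∧ 0 ≤ p.2.1 ∧ 0 ≤ p.2.2} ∧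
  (∃ k : ℝ, 0 ≤ k ∧ k < 1 ∧ ∀ r s : ℝ, 0 ≤ r → 0 ≤ s →
    (r ≤ f (s, r, s) ∨ r ≤ f (r, s, s)) → r ≤ k * s) ∧
  (∀ lam : ℝ, 0 < lam → ∀ r s t : ℝ, 0 ≤ r → 0 ≤ s → 0 ≤ t →
    lam * f (r, s, t) ≤ f (lam * r, lam * s, lam * t))

open Filter Topology Function Set

namespace MemA

variable {f : ℝ × ℝ × ℝ → ℝ}

theorem nonpos_of_le_apply (hf : MemA f) {r : ℝ} (hr : 0 ≤ r)
    (h : r ≤ f (0, r, 0) ∨ r ≤ f (r, 0, 0)) : r ≤ 0 := by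
  obtain ⟨k, -, -, hk⟩ := hf.2.1
  simpa using hk r 0 hr le_rfl h

theorem apply_le_mul (hf : MemA f) {r s t : ℝ} (hr : 0 < r) (hs : 0 ≤ s) (ht : 0 ≤ t) :
    f (r, s, t) ≤ r * f (1, s / r, t / r) := by
  have h := hf.2.2 r⁻¹ (inv_pos.2 hr) r s t hr.le hs ht
  rw [inv_mul_cancel₀ hr.ne'] at h
  simp only [inv_mul_eq_div] at h
  rwa [div_le_iff₀' hr] at h

theorem tendsto_apply (hf : MemA f) {ι : Type*} {l : Filter ι} {r s t : ι → ℝ} {x : ℝ × ℝ × ℝ}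
    (hx : 0 ≤ x.1 ∧ 0 ≤ x.2.1 ∧ 0 ≤ x.2.2)
    (hrst : Tendsto (fun i => (r i, s i, t i)) l (𝓝 x))
    (hnonneg : ∀ᶠ i in l, 0 ≤ r i ∧ 0 ≤ s i ∧ 0 ≤ t i) :
    Tendsto (fun i => f (r i, s i, t i)) l (𝓝 (f x)) :=
  (hf.1 x hx).tendsto.comp (tendsto_nhdsWithin_iff.2 ⟨hrst, hnonneg⟩)

theorem exists_apply_one_le (hf : MemA f) :
    ∃ δ > 0, ∃ c < 1, ∀ t ∈ Icc (0 : ℝ) δ, f (1, t, 0) ≤ c := by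
  have h1 : f (1, 0, 0) < 1 := by
    by_contra! h
    linarith [hf.nonpos_of_le_apply zero_le_one (.inr h)]
  obtain ⟨c, hfc, hc⟩ := exists_between h1
  have hcont : Tendsto (fun t : ℝ => f (1, t, 0)) (𝓝[≥] 0) (𝓝 (f (1, 0, 0))) :=
    hf.tendsto_apply ⟨zero_le_one, le_rfl, le_rfl⟩
      (tendsto_const_nhds.prodMk_nhds ((tendsto_nhdsWithin_of_tendsto_nhds tendsto_id).prodMk_nhds
        tendsto_const_nhds))
      (eventually_nhdsWithin_of_forall fun t ht => ⟨zero_le_one, ht, le_rfl⟩)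
  obtain ⟨δ, hδ, hsub⟩ := mem_nhdsGE_iff_exists_Icc_subset.1 (hcont.eventually_lt_const hfc)
  exact ⟨δ, hδ, c, hc, fun t ht => (hsub ht).le⟩

end MemA

def IsAContraction {α : Type*} [MetricSpace α] (f : ℝ × ℝ × ℝ → ℝ) (S : α → α) : Prop :=
  ∀ u v, u ≠ v → dist (S u) (S v) ≤ f (dist u v, dist u (S u), dist v (S v))

namespace IsAContraction

variable {α : Type*} [MetricSpace α] {f : ℝ × ℝ × ℝ → ℝ} {S : α → α}

theorem dist_iterate_succ_le (hS : IsAContraction f S) {k : ℝ}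
    (hk : ∀ r s : ℝ, 0 ≤ r → 0 ≤ s → r ≤ f (s, r, s) → r ≤ k * s) (x : α) (n : ℕ) :
    dist (S^[n + 1] x) (S^[n + 2] x) ≤ k * dist (S^[n] x) (S^[n + 1] x) := by
  set y := S^[n] x
  have hy1 : S^[n + 1] x = S y := iterate_succ_apply' S n x
  have hy2 : S^[n + 2] x = S (S y) := by rw [iterate_succ_apply', hy1]
  rw [hy1, hy2]
  by_cases hfix : S y = y
  · simp [hfix]
  · refine hk _ _ dist_nonneg dist_nonneg ?_
    calc dist (S y) (S (S y)) = dist (S (S y)) (S y) := dist_comm _ _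
      _ ≤ f (dist (S y) y, dist (S y) (S (S y)), dist y (S y)) := hS _ _ hfix
      _ = f (dist y (S y), dist (S y) (S (S y)), dist y (S y)) := by rw [dist_comm (S y)]

theorem isFixedPt_of_tendsto (hS : IsAContraction f S) (hf : MemA f) {ι : Type*} {l : Filter ι}
    [l.NeBot] {u : ι → α} {p : α} (hu : Tendsto u l (𝓝 p))
    (hSu : Tendsto (fun i => dist (u i) (S (u i))) l (𝓝 0)) : IsFixedPt S p := by
  by_contra hp
  set q := dist p (S p)
  have hq : 0 < q := dist_pos.2 (Ne.symm hp)
  have hne : ∀ᶠ i in l, p ≠ u i := by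
    filter_upwards [hSu.eventually_lt_const hq] with i hi hpi
    rw [← hpi] at hi
    exact lt_irrefl _ hi
  have hSu' : Tendsto (fun i => S (u i)) l (𝓝 p) :=
    tendsto_iff_dist_tendsto_zero.2 <| squeeze_zero (fun _ => dist_nonneg)
      (fun i => dist_triangle_left _ _ (u i)) <| by
        simpa using hSu.add (tendsto_iff_dist_tendsto_zero.1 hu)
  have hlhs : Tendsto (fun i => dist (S p) (S (u i))) l (𝓝 q) := by
    simpa [dist_comm] using tendsto_const_nhds.dist hSu'
  have hargs : Tendsto (fun i => (dist p (u i), q, dist (u i) (S (u i)))) l (𝓝 (0, q, 0)) := by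
    simpa using ((tendsto_const_nhds (x := p)).dist hu).prodMk_nhds
      ((tendsto_const_nhds (x := q)).prodMk_nhds hSu)
  have hrhs : Tendsto (fun i => f (dist p (u i), q, dist (u i) (S (u i)))) l (𝓝 (f (0, q, 0))) :=
    hf.tendsto_apply ⟨le_rfl, hq.le, le_rfl⟩ hargs
      (.of_forall fun _ => ⟨dist_nonneg, hq.le, dist_nonneg⟩)
  have hle : q ≤ f (0, q, 0) :=
    le_of_tendsto_of_tendsto hlhs hrhs (hne.mono fun i hi => hS p (u i) hi)
  exact hq.not_ge (hf.nonpos_of_le_apply hq.le (.inl hle))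

theorem exists_isFixedPt [CompleteSpace α] [Nonempty α] (hS : IsAContraction f S)
    (hf : MemA f) : ∃ p, IsFixedPt S p := by
  obtain ⟨k, hk0, hk1, hk⟩ := hf.2.1
  obtain ⟨x⟩ := ‹Nonempty α›
  have hgeom (n : ℕ) : dist (S^[n] x) (S^[n + 1] x) ≤ dist x (S x) * k ^ n := by
    rw [mul_comm]
    exact le_geom (u := fun n => dist (S^[n] x) (S^[n + 1] x)) hk0 n
      fun m _ => hS.dist_iterate_succ_le (fun r s hr hs h => hk r s hr hs (.inl h)) x m
  obtain ⟨p, hp⟩ := cauchySeq_tendsto_of_complete (cauchySeq_of_le_geometric k _ hk1 hgeom)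
  refine ⟨p, hS.isFixedPt_of_tendsto hf hp ?_⟩
  refine squeeze_zero (fun _ => dist_nonneg) (fun n => ?_)
    (by simpa using (tendsto_pow_atTop_nhds_zero_of_lt_one hk0 hk1).const_mul (dist x (S x)))
  simpa only [iterate_succ_apply'] using hgeom n

theorem dist_le_mul_dist_self (hS : IsAContraction f S) (hf : MemA f) {δ c : ℝ} (hδ : 0 < δ)
    (hc : c < 1) (hfc : ∀ t ∈ Icc (0 : ℝ) δ, f (1, t, 0) ≤ c) {p : α} (hp : IsFixedPt S p)
    (u : α) : dist u p ≤ max δ⁻¹ (1 - c)⁻¹ * dist u (S u) := by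
  rcases eq_or_ne u p with rfl | hu
  · rw [dist_self]
    exact mul_nonneg (le_max_of_le_left (inv_nonneg.2 hδ.le)) dist_nonneg
  set r := dist u p
  set ε := dist u (S u)
  have hr : 0 < r := dist_pos.2 hu
  have hε : 0 ≤ ε := dist_nonneg
  have hcontr : r ≤ ε + f (r, ε, 0) := by
    have h := hS u p hu
    rw [hp, dist_self] at h
    linarith [dist_triangle u (S u) p]
  rcases le_or_gt ε (δ * r) with hsmall | hlarge
  · have hf1 : f (1, ε / r, 0) ≤ c :=
      hfc _ ⟨div_nonneg hε hr.le, (div_le_iff₀ hr).2 (by linarith)⟩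
    have hhom := hf.apply_le_mul hr hε le_rfl
    rw [zero_div] at hhom
    have hrc : (1 - c) * r ≤ ε := by
      nlinarith [mul_le_mul_of_nonneg_left hf1 hr.le]
    calc r ≤ (1 - c)⁻¹ * ε := by rwa [inv_mul_eq_div, le_div_iff₀ (by linarith), mul_comm]
      _ ≤ _ := by gcongr; exact le_max_right _ _
  · calc r ≤ δ⁻¹ * ε := by rw [inv_mul_eq_div, le_div_iff₀ hδ]; linarith
      _ ≤ _ := by gcongr; exact le_max_left _ _

theorem eq_of_isFixedPt (hS : IsAContraction f S) (hf : MemA f) {p q : α} (hp : IsFixedPt S p)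
    (hq : IsFixedPt S q) : q = p := by
  obtain ⟨δ, hδ, c, hc, hfc⟩ := hf.exists_apply_one_le
  simpa [hq.eq] using hS.dist_le_mul_dist_self hf hδ hc hfc hp q

theorem tendsto_of_tendsto_dist_self (hS : IsAContraction f S) (hf : MemA f) {p : α}
    (hp : IsFixedPt S p) {ι : Type*} {l : Filter ι} {u : ι → α}
    (hu : Tendsto (fun i => dist (u i) (S (u i))) l (𝓝 0)) : Tendsto u l (𝓝 p) := by
  obtain ⟨δ, hδ, c, hc, hfc⟩ := hf.exists_apply_one_le
  refine tendsto_iff_dist_tendsto_zero.2 <| squeeze_zero (fun _ => dist_nonneg)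
    (fun i => hS.dist_le_mul_dist_self hf hδ hc hfc hp (u i)) ?_
  simpa using hu.const_mul (max δ⁻¹ (1 - c)⁻¹)

end IsAContraction

section AveragedMap

variable {X : Type*} [NormedAddCommGroup X] [NormedSpace ℝ X]

noncomputable def averagedMap (b : ℝ) (T : X → X) (u : X) : X :=
  (b + 1)⁻¹ • (b • u + T u)

variable {b : ℝ} {T : X → X}

theorem sub_averagedMap (hb : b + 1 ≠ 0) (u : X) :
    u - averagedMap b T u = (b + 1)⁻¹ • (u - T u) := by
  unfold averagedMap
  match_scalars
  · field_simp
    ring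
  · ring

theorem averagedMap_sub_averagedMap (u v : X) :
    averagedMap b T u - averagedMap b T v = (b + 1)⁻¹ • (b • (u - v) + T u - T v) := by
  unfold averagedMap
  match_scalars <;> ring

theorem isFixedPt_averagedMap_iff (hb : b + 1 ≠ 0) {u : X} :
    IsFixedPt (averagedMap b T) u ↔ IsFixedPt T u := by
  rw [IsFixedPt, IsFixedPt, eq_comm, ← sub_eq_zero, sub_averagedMap hb, smul_eq_zero,
    or_iff_right (inv_ne_zero hb), sub_eq_zero, eq_comm]

theorem dist_self_averagedMap (hb : 0 < b + 1) (u : X) :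
    dist u (averagedMap b T u) = (b + 1)⁻¹ * ‖u - T u‖ := by
  rw [dist_eq_norm, sub_averagedMap hb.ne', norm_smul, Real.norm_of_nonneg (inv_pos.2 hb).le]

theorem isAContraction_averagedMap {f : ℝ × ℝ × ℝ → ℝ} (hf : MemA f) (hb : 0 < b + 1)
    (hT : ∀ u v : X, u ≠ v →
      ‖b • (u - v) + T u - T v‖ ≤ f ((b + 1) * ‖u - v‖, ‖u - T u‖, ‖v - T v‖)) :
    IsAContraction f (averagedMap b T) := by
  intro u v huv
  have hhom := hf.2.2 (b + 1)⁻¹ (inv_pos.2 hb) ((b + 1) * ‖u - v‖) _ _ (by positivity)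
    (norm_nonneg (u - T u)) (norm_nonneg (v - T v))
  rw [inv_mul_cancel_left₀ hb.ne'] at hhom
  rw [dist_eq_norm, averagedMap_sub_averagedMap, norm_smul, Real.norm_of_nonneg (inv_pos.2 hb).le,
    dist_self_averagedMap hb, dist_self_averagedMap hb, dist_eq_norm]
  exact (mul_le_mul_of_nonneg_left (hT u v huv) (inv_pos.2 hb).le).trans hhom

end AveragedMap

/-- The fixed point problem of an enriched `𝒜`-contraction on a real Banach space
is well-posed. -/
theorem enriched_A_contraction_wellPosed
    {X : Type*} [NormedAddCommGroup X] [NormedSpace ℝ X] [CompleteSpace X]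
    (T : X → X) (f : ℝ × ℝ × ℝ → ℝ) (hf : MemA f) (b : ℝ) (hb : 0 ≤ b)
    (hT : ∀ u v : X, u ≠ v →
      ‖b • (u - v) + T u - T v‖ ≤ f ((b + 1) * ‖u - v‖, ‖u - T u‖, ‖v - T v‖)) :
    ∃ p : X, (T p = p ∧ ∀ q : X, T q = q → q = p) ∧
      ∀ u : ℕ → X,
        Filter.Tendsto (fun n => ‖u n - T (u n)‖) Filter.atTop (nhds 0) →
        Filter.Tendsto (fun n => ‖u n - p‖) Filter.atTop (nhds 0) := by
  have hb1 : 0 < b + 1 := by linarith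
  have hS := isAContraction_averagedMap hf hb1 hT
  obtain ⟨p, hp⟩ := hS.exists_isFixedPt hf
  refine ⟨p, ⟨(isFixedPt_averagedMap_iff hb1.ne').1 hp, fun q hq =>
    hS.eq_of_isFixedPt hf hp ((isFixedPt_averagedMap_iff hb1.ne').2 hq)⟩, fun u hu => ?_⟩
  have hSu : Tendsto (fun n => dist (u n) (averagedMap b T (u n))) atTop (𝓝 0) := by
    simpa [dist_self_averagedMap hb1] using hu.const_mul (b + 1)⁻¹
  exact tendsto_iff_norm_sub_tendsto_zero.1 (hS.tendsto_of_tendsto_dist_self hf hp hSu)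
end

section
/- Let (X, ‖·‖) be a real Banach space and let T : X → X be an enriched Bianchini contraction: there exist b ∈ [0,∞) and α ∈ [0,1) such that ‖b(u−v) + Tu − Tv‖ ≤ α·max{‖u − Tu‖, ‖v − Tv‖} for all u, v ∈ X with u ≠ v. Then T has a unique fixed point p ∈ X, and there exists λ ∈ (0,1] such that for every u₀ ∈ X the sequence defined by u_{n+1} = (1−λ)u_n + λT u_n (n ≥ 0) converges to p. -/
/-!
With `λ = 1 / (b + 1)` the averaged map `S u = (1 - λ) u + λ T u` satisfies
`S u - S v = λ (b (u - v) + T u - T v)` and `u - S u = λ (u - T u)`, so the enriched condition on `T`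
says exactly that `S` is a Bianchini contraction: `d(S u, S v) ≤ α max (d(u, S u), d(v, S v))`.
Along an orbit of `S` this gives `d(u_{n+1}, u_{n+2}) ≤ α d(u_n, u_{n+1})`, so every orbit is Cauchy,
and the Bianchini inequality between `u_n` and the limit forces the limit to be fixed.
Fixed points of `S` and `T` coincide.
-/

open Filter Topology Function

section Bianchini

variable {X : Type*} [MetricSpace X] {f : X → X} {α : ℝ}

def IsBianchiniContraction (α : ℝ) (f : X → X) : Prop :=
  ∀ x y, dist (f x) (f y) ≤ α * max (dist x (f x)) (dist y (f y))

namespace IsBianchiniContraction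

theorem eq_of_isFixedPt (hf : IsBianchiniContraction α f) {p q : X}
    (hp : IsFixedPt f p) (hq : IsFixedPt f q) : p = q := by
  have := hf p q
  simp only [hp.eq, hq.eq, dist_self, max_self, mul_zero] at this
  exact dist_le_zero.mp this

variable {u : ℕ → X}

theorem dist_succ_le (hf : IsBianchiniContraction α f) (hα0 : 0 ≤ α) (hα : α < 1)
    (hu : ∀ n, u (n + 1) = f (u n)) (n : ℕ) :
    dist (u (n + 1)) (u (n + 2)) ≤ α * dist (u n) (u (n + 1)) := by
  have h := hf (u n) (u (n + 1))
  rw [← hu n, ← hu (n + 1)] at h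
  rcases le_total (dist (u (n + 1)) (u (n + 2))) (dist (u n) (u (n + 1))) with hle | hle
  · rwa [max_eq_left hle] at h
  · rw [max_eq_right hle] at h
    have hzero : dist (u (n + 1)) (u (n + 2)) = 0 := by
      nlinarith [dist_nonneg (x := u (n + 1)) (y := u (n + 2))]
    rw [hzero]
    exact mul_nonneg hα0 dist_nonneg

theorem dist_le_geometric (hf : IsBianchiniContraction α f) (hα0 : 0 ≤ α) (hα : α < 1)
    (hu : ∀ n, u (n + 1) = f (u n)) (n : ℕ) :
    dist (u n) (u (n + 1)) ≤ dist (u 0) (u 1) * α ^ n := by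
  induction n with
  | zero => simp
  | succ n ih =>
    calc dist (u (n + 1)) (u (n + 2)) ≤ α * dist (u n) (u (n + 1)) :=
          hf.dist_succ_le hα0 hα hu n
      _ ≤ α * (dist (u 0) (u 1) * α ^ n) := mul_le_mul_of_nonneg_left ih hα0
      _ = dist (u 0) (u 1) * α ^ (n + 1) := by ring

theorem isFixedPt_of_tendsto (hf : IsBianchiniContraction α f) (hα0 : 0 ≤ α) (hα : α < 1)
    (hu : ∀ n, u (n + 1) = f (u n)) {q : X} (hq : Tendsto u atTop (𝓝 q)) :
    IsFixedPt f q := by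
  have hstep : Tendsto (fun n => dist (u n) (u (n + 1))) atTop (𝓝 0) :=
    squeeze_zero (fun _ => dist_nonneg) (hf.dist_le_geometric hα0 hα hu) <| by
      simpa using (tendsto_pow_atTop_nhds_zero_of_lt_one hα0 hα).const_mul (dist (u 0) (u 1))
  have hle : ∀ n, dist (u (n + 1)) (f q) ≤ α * max (dist (u n) (u (n + 1))) (dist q (f q)) := by
    intro n
    simpa only [← hu n] using hf (u n) q
  have hlim : dist q (f q) ≤ α * max 0 (dist q (f q)) :=
    le_of_tendsto_of_tendsto'
      ((hq.comp (tendsto_add_atTop_nat 1)).dist tendsto_const_nhds)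
      ((hstep.max tendsto_const_nhds).const_mul α) hle
  rw [max_eq_right dist_nonneg] at hlim
  have : dist q (f q) = 0 := by nlinarith [dist_nonneg (x := q) (y := f q)]
  exact (dist_eq_zero.mp this).symm

theorem exists_tendsto [CompleteSpace X] (hf : IsBianchiniContraction α f) (hα0 : 0 ≤ α)
    (hα : α < 1) (hu : ∀ n, u (n + 1) = f (u n)) :
    ∃ q, IsFixedPt f q ∧ Tendsto u atTop (𝓝 q) := by
  obtain ⟨q, hq⟩ := cauchySeq_tendsto_of_complete <|
    cauchySeq_of_le_geometric α _ hα (hf.dist_le_geometric hα0 hα hu)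
  exact ⟨q, hf.isFixedPt_of_tendsto hα0 hα hu hq, hq⟩

end IsBianchiniContraction

end Bianchini

section Krasnoselskii

variable {E : Type*} [NormedAddCommGroup E] [NormedSpace ℝ E] (lam : ℝ) (T : E → E)

def krasnoselskiiMap (u : E) : E := (1 - lam) • u + lam • T u

theorem sub_krasnoselskiiMap (u : E) : u - krasnoselskiiMap lam T u = lam • (u - T u) := by
  simp only [krasnoselskiiMap]
  module

variable {lam T}

theorem isFixedPt_krasnoselskiiMap_iff (hlam : lam ≠ 0) {u : E} :
    IsFixedPt (krasnoselskiiMap lam T) u ↔ IsFixedPt T u := by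
  rw [IsFixedPt, IsFixedPt, ← sub_eq_zero, ← neg_sub, neg_eq_zero, sub_krasnoselskiiMap,
    smul_eq_zero, or_iff_right hlam, sub_eq_zero, eq_comm]

theorem krasnoselskiiMap_sub_krasnoselskiiMap {b : ℝ} (hb : lam * (b + 1) = 1) (u v : E) :
    krasnoselskiiMap lam T u - krasnoselskiiMap lam T v = lam • (b • (u - v) + T u - T v) := by
  simp only [krasnoselskiiMap]
  match_scalars <;> linarith

theorem isBianchiniContraction_krasnoselskiiMap {b α : ℝ} (hb : 0 ≤ b) (hα0 : 0 ≤ α)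
    (hT : ∀ u v : E, u ≠ v → ‖b • (u - v) + T u - T v‖ ≤ α * max ‖u - T u‖ ‖v - T v‖) :
    IsBianchiniContraction α (krasnoselskiiMap (b + 1)⁻¹ T) := by
  have hlam : (0 : ℝ) < (b + 1)⁻¹ := by positivity
  intro u v
  rcases eq_or_ne u v with rfl | huv
  · rw [dist_self]
    positivity
  simp only [dist_eq_norm, krasnoselskiiMap_sub_krasnoselskiiMap (inv_mul_cancel₀ (by positivity)),
    sub_krasnoselskiiMap, norm_smul, Real.norm_of_nonneg hlam.le, ← mul_max_of_nonneg _ _ hlam.le]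
  calc (b + 1)⁻¹ * ‖b • (u - v) + T u - T v‖
      ≤ (b + 1)⁻¹ * (α * max ‖u - T u‖ ‖v - T v‖) := by gcongr; exact hT u v huv
    _ = α * ((b + 1)⁻¹ * max ‖u - T u‖ ‖v - T v‖) := by ring

end Krasnoselskii

/-- An enriched Bianchini contraction on a real Banach space has a unique fixed point `p`,
and there is `λ ∈ (0,1]` such that every Krasnoselskii iteration converges to `p`. -/
theorem enriched_bianchini_contraction_fixedPoint
    {X : Type*} [NormedAddCommGroup X] [NormedSpace ℝ X] [CompleteSpace X]
    (T : X → X) (b α : ℝ) (hb : 0 ≤ b) (hα0 : 0 ≤ α) (hα : α < 1)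
    (hT : ∀ u v : X, u ≠ v →
      ‖b • (u - v) + T u - T v‖ ≤ α * max ‖u - T u‖ ‖v - T v‖) :
    ∃ p : X, (T p = p ∧ ∀ q : X, T q = q → q = p) ∧
      ∃ lam : ℝ, 0 < lam ∧ lam ≤ 1 ∧
        ∀ u : ℕ → X, (∀ n : ℕ, u (n + 1) = (1 - lam) • u n + lam • T (u n)) →
          Filter.Tendsto u Filter.atTop (nhds p) := by
  set lam := (b + 1)⁻¹
  have hlam : 0 < lam := by positivity
  have hS := isBianchiniContraction_krasnoselskiiMap hb hα0 hT
  have hfix : ∀ q, IsFixedPt (krasnoselskiiMap lam T) q ↔ T q = q :=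
    fun q => isFixedPt_krasnoselskiiMap_iff hlam.ne'
  obtain ⟨p, hp, -⟩ := hS.exists_tendsto hα0 hα (u := fun n => (krasnoselskiiMap lam T)^[n] 0)
    fun n => iterate_succ_apply' _ n 0
  refine ⟨p, ⟨(hfix p).mp hp, fun q hq => hS.eq_of_isFixedPt ((hfix q).mpr hq) hp⟩,
    lam, hlam, inv_le_one_of_one_le₀ (by linarith), fun u hu => ?_⟩
  obtain ⟨q, hq, hlim⟩ := hS.exists_tendsto hα0 hα hu
  rwa [hS.eq_of_isFixedPt hq hp] at hlim
end
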